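/- Fix a VASS MDP A and a set of counters C. Assume there exists a multi-component z of A with Δ_C(z) = 0 whose support contains the support of every multi-component in a set Y, where Y is the set of all multi-components y of A with support contained in the support of z. Then the set { Δ_C(y) : y ∈ Y } of effects restricted to C of elements of Y, viewed as a subset of ℚ^C, is a ℚ-linear subspace (it contains 0, is closed under addition, and is closed under multiplication by arbitrary rational scalars, including negative ones). -/

import Mathlib

/-- Transitions of a `d`-dimensional VASS over state space `Q`: a source state,
a counter update vector, and a target state. -/
abbrev VTrans (Q : Type*) (d : ℕ) := Q × (Fin d → ℤ) × Q

/-- Outgoing transitions of state `p` among the transitions `T`. -/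
def outT {Q : Type*} [DecidableEq Q] {d : ℕ} (T : Finset (VTrans Q d)) (p : Q) :
    Finset (VTrans Q d) :=
  T.filter fun t => t.1 = p

/-- Incoming transitions of state `p` among the transitions `T`. -/
def inT {Q : Type*} [DecidableEq Q] {d : ℕ} (T : Finset (VTrans Q d)) (p : Q) :
    Finset (VTrans Q d) :=
  T.filter fun t => t.2.2 = p

/-- `x ∈ ℚ^T` is a multi-component: it is nonnegative, satisfies flow conservation at every
state, and at each probabilistic state the flow on each outgoing transition is its probability
times the total incoming flow. -/
structure IsMultiComponent {Q : Type*} [DecidableEq Q] {d : ℕ} (T : Finset (VTrans Q d))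
    (Qp : Set Q) (P : VTrans Q d → ℚ) (x : VTrans Q d → ℚ) : Prop where
  nonneg : ∀ t ∈ T, 0 ≤ x t
  flow : ∀ p : Q, ∑ t ∈ outT T p, x t = ∑ t ∈ inT T p, x t
  prob : ∀ p ∈ Qp, ∀ t ∈ outT T p, x t = P t * ∑ t' ∈ inT T p, x t'

/-- The effect of `x` on counter `c`: `Δ(x)(c) = ∑_{t ∈ T} x(t) · u_t(c)`. -/
def effect {Q : Type*} {d : ℕ} (T : Finset (VTrans Q d)) (x : VTrans Q d → ℚ) (c : Fin d) : ℚ :=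
  ∑ t ∈ T, x t * (t.2.1 c : ℚ)

/-- The set of effects, restricted to counters in `C`, of all multi-components whose support is
contained in the support of `z`, viewed as a subset of `ℚ^C`. -/
def effectSet {Q : Type*} [DecidableEq Q] {d : ℕ} (T : Finset (VTrans Q d)) (Qp : Set Q)
    (P : VTrans Q d → ℚ) (C : Set (Fin d)) (z : VTrans Q d → ℚ) : Set (↥C → ℚ) :=
  {f | ∃ y : VTrans Q d → ℚ, IsMultiComponent T Qp P y ∧
        (∀ t ∈ T, 0 < y t → 0 < z t) ∧ (∀ c : ↥C, f c = effect T y (c : Fin d))}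

/-!
Multi-components are cut out by linear equations together with nonnegativity, so a linear
combination of multi-components is again one as soon as it is nonnegative, and `Δ_C` is linear.
This gives `0`, sums and nonnegative multiples directly. For negation, `z` is positive on the
whole common support, so for `y` supported there some `k • z` dominates `y` pointwise; then
`k • z - y` is a multi-component with the same support bound and `Δ_C (k • z - y) = -Δ_C y`
because `Δ_C z = 0`.
-/

theorem exists_le_mul_of_pos_imp_pos {ι 𝕜 : Type*} [Field 𝕜] [LinearOrder 𝕜]
    [IsStrictOrderedRing 𝕜] (s : Finset ι) {y z : ι → 𝕜} (hz : ∀ t ∈ s, 0 ≤ z t)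
    (hyz : ∀ t ∈ s, 0 < y t → 0 < z t) : ∃ k : 𝕜, 0 ≤ k ∧ ∀ t ∈ s, y t ≤ k * z t := by
  refine ⟨∑ t ∈ s, |y t / z t|, Finset.sum_nonneg fun t _ => abs_nonneg _, fun t ht => ?_⟩
  have hk : |y t / z t| ≤ ∑ t ∈ s, |y t / z t| :=
    Finset.single_le_sum (fun t _ => abs_nonneg (y t / z t)) ht
  rcases (hz t ht).lt_or_eq with hzt | hzt
  · calc y t = y t / z t * z t := (div_mul_cancel₀ _ hzt.ne').symm
      _ ≤ |y t / z t| * z t := by gcongr; exact le_abs_self _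
      _ ≤ _ := by gcongr
  · rw [← hzt, mul_zero]
    exact not_lt.mp fun hy => (hyz t ht hy).ne hzt

section Effect

variable {Q : Type*} {d : ℕ} (T : Finset (VTrans Q d)) (c : Fin d)

theorem effect_zero : effect T 0 c = 0 := by
  simp [effect]

theorem effect_add (x y : VTrans Q d → ℚ) :
    effect T (x + y) c = effect T x c + effect T y c := by
  simp [effect, add_mul, Finset.sum_add_distrib]

theorem effect_sub (x y : VTrans Q d → ℚ) :
    effect T (x - y) c = effect T x c - effect T y c := by
  simp [effect, sub_mul, Finset.sum_sub_distrib]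

theorem effect_smul (a : ℚ) (x : VTrans Q d → ℚ) :
    effect T (a • x) c = a * effect T x c := by
  simp [effect, Finset.mul_sum, mul_assoc]

end Effect

namespace IsMultiComponent

variable {Q : Type*} [DecidableEq Q] {d : ℕ} {T : Finset (VTrans Q d)} {Qp : Set Q}
  {P : VTrans Q d → ℚ} {x y : VTrans Q d → ℚ}

theorem zero : IsMultiComponent T Qp P 0 where
  nonneg _ _ := le_rfl
  flow _ := by simp
  prob _ _ _ _ := by simp

theorem add (hx : IsMultiComponent T Qp P x) (hy : IsMultiComponent T Qp P y) :
    IsMultiComponent T Qp P (x + y) where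
  nonneg t ht := add_nonneg (hx.nonneg t ht) (hy.nonneg t ht)
  flow p := by simp only [Pi.add_apply, Finset.sum_add_distrib, hx.flow p, hy.flow p]
  prob p hp t ht := by
    simp only [Pi.add_apply, Finset.sum_add_distrib, hx.prob p hp t ht, hy.prob p hp t ht, mul_add]

theorem smul {a : ℚ} (ha : 0 ≤ a) (hx : IsMultiComponent T Qp P x) :
    IsMultiComponent T Qp P (a • x) where
  nonneg t ht := mul_nonneg ha (hx.nonneg t ht)
  flow p := by simp only [Pi.smul_apply, smul_eq_mul, ← Finset.mul_sum, hx.flow p]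
  prob p hp t ht := by
    simp only [Pi.smul_apply, smul_eq_mul, ← Finset.mul_sum, hx.prob p hp t ht]
    ring

theorem sub (hx : IsMultiComponent T Qp P x) (hy : IsMultiComponent T Qp P y)
    (hyx : ∀ t ∈ T, y t ≤ x t) : IsMultiComponent T Qp P (x - y) where
  nonneg t ht := sub_nonneg.mpr (hyx t ht)
  flow p := by simp only [Pi.sub_apply, Finset.sum_sub_distrib, hx.flow p, hy.flow p]
  prob p hp t ht := by
    simp only [Pi.sub_apply, Finset.sum_sub_distrib, hx.prob p hp t ht, hy.prob p hp t ht, mul_sub]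

end IsMultiComponent

section EffectSet

variable {Q : Type*} [DecidableEq Q] {d : ℕ} {T : Finset (VTrans Q d)} {Qp : Set Q}
  {P : VTrans Q d → ℚ} {C : Set (Fin d)} {z : VTrans Q d → ℚ}

theorem zero_mem_effectSet : 0 ∈ effectSet T Qp P C z :=
  ⟨0, IsMultiComponent.zero, fun _ _ h => absurd h (lt_irrefl 0),
    fun c => (effect_zero T c).symm⟩

theorem add_mem_effectSet {u v : ↥C → ℚ} (hu : u ∈ effectSet T Qp P C z)
    (hv : v ∈ effectSet T Qp P C z) : u + v ∈ effectSet T Qp P C z := by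
  obtain ⟨x, hx, hxz, hxu⟩ := hu
  obtain ⟨y, hy, hyz, hyv⟩ := hv
  refine ⟨x + y, hx.add hy, fun t ht hxy => ?_, fun c => by
    rw [Pi.add_apply, hxu, hyv, effect_add]⟩
  rcases (hx.nonneg t ht).lt_or_eq with hxt | hxt
  · exact hxz t ht hxt
  · exact hyz t ht (by simpa [← hxt] using hxy)

theorem smul_mem_effectSet_of_nonneg {a : ℚ} (ha : 0 ≤ a) {u : ↥C → ℚ}
    (hu : u ∈ effectSet T Qp P C z) : a • u ∈ effectSet T Qp P C z := by
  obtain ⟨y, hy, hyz, hyu⟩ := hu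
  exact ⟨a • y, hy.smul ha, fun t ht hay => hyz t ht (pos_of_mul_pos_right hay ha),
    fun c => by rw [Pi.smul_apply, smul_eq_mul, hyu, effect_smul]⟩

theorem neg_mem_effectSet (hz : IsMultiComponent T Qp P z) (hzC : ∀ c ∈ C, effect T z c = 0)
    {u : ↥C → ℚ} (hu : u ∈ effectSet T Qp P C z) : -u ∈ effectSet T Qp P C z := by
  obtain ⟨y, hy, hyz, hyu⟩ := hu
  obtain ⟨k, hk0, hk⟩ := exists_le_mul_of_pos_imp_pos T hz.nonneg hyz
  refine ⟨k • z - y, (hz.smul hk0).sub hy hk, fun t ht hw => ?_, fun c => ?_⟩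
  · rcases (hz.nonneg t ht).lt_or_eq with hzt | hzt
    · exact hzt
    · have := hy.nonneg t ht
      simp only [Pi.sub_apply, Pi.smul_apply, smul_eq_mul, ← hzt, mul_zero] at hw
      linarith
  · rw [Pi.neg_apply, hyu, effect_sub, effect_smul, hzC c c.2, mul_zero, zero_sub]

end EffectSet

theorem effectSet_subspace_general {Q : Type*} [DecidableEq Q] {d : ℕ}
    (T : Finset (VTrans Q d)) (Qp : Set Q) (P : VTrans Q d → ℚ)
    (C : Set (Fin d)) (z : VTrans Q d → ℚ)
    (hz : IsMultiComponent T Qp P z) (hzC : ∀ c ∈ C, effect T z c = 0) :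
    (0 ∈ effectSet T Qp P C z) ∧
    (∀ u ∈ effectSet T Qp P C z, ∀ v ∈ effectSet T Qp P C z, u + v ∈ effectSet T Qp P C z) ∧
    (∀ (a : ℚ), ∀ u ∈ effectSet T Qp P C z, a • u ∈ effectSet T Qp P C z) := by
  refine ⟨zero_mem_effectSet, fun u hu v hv => add_mem_effectSet hu hv, fun a u hu => ?_⟩
  rcases le_or_gt 0 a with ha | ha
  · exact smul_mem_effectSet_of_nonneg ha hu
  · have hnu := neg_mem_effectSet hz hzC hu
    simpa using smul_mem_effectSet_of_nonneg (neg_nonneg.mpr ha.le) hnu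

/-- Given a multi-component `z` with `Δ_C(z) = 0`, the set of effects (restricted to `C`) of
multi-components supported inside the support of `z` is a `ℚ`-linear subspace: it contains `0`,
is closed under addition, and is closed under multiplication by arbitrary rational scalars. -/
theorem effectSet_subspace {Q : Type*} [Fintype Q] [DecidableEq Q] {d : ℕ}
    (T : Finset (VTrans Q d)) (Qn Qp : Set Q) (P : VTrans Q d → ℚ)
    (hdisj : ∀ q : Q, ¬(q ∈ Qn ∧ q ∈ Qp)) (hcover : ∀ q : Q, q ∈ Qn ∨ q ∈ Qp)
    (hout : ∀ p : Q, (outT T p).Nonempty)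
    (hPpos : ∀ p ∈ Qp, ∀ t ∈ outT T p, 0 < P t)
    (hPsum : ∀ p ∈ Qp, ∑ t ∈ outT T p, P t = 1)
    (C : Set (Fin d)) (z : VTrans Q d → ℚ)
    (hz : IsMultiComponent T Qp P z) (hzC : ∀ c ∈ C, effect T z c = 0) :
    (0 ∈ effectSet T Qp P C z) ∧
    (∀ u ∈ effectSet T Qp P C z, ∀ v ∈ effectSet T Qp P C z, u + v ∈ effectSet T Qp P C z) ∧
    (∀ (a : ℚ), ∀ u ∈ effectSet T Qp P C z, a • u ∈ effectSet T Qp P C z) :=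
  effectSet_subspace_general T Qp P C z hz hzC
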